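/- arXiv:0807.3406 — 2 statements merged into one kernel-verified Lean document; each statement's English description precedes it below -/
import Mathlib

section
/- The set of return words on a non-empty prefix u of a uniformly recurrent sequence X is a code: the induced monoid morphism Θ_{X,u} from the free monoid on the (finite) set of return words to A* is injective. -/
namespace Cobham

open Filter

variable {A : Type*} {B : Type*}

/-- The factor `X_i X_{i+1} ... X_{i+n-1}` of the sequence `X`. -/
def word (X : ℕ → A) (i n : ℕ) : List A := (List.range n).map fun k => X (i + k)

/-- `u` occurs in `X` at position `i`. -/
def OccursAt (X : ℕ → A) (u : List A) (i : ℕ) : Prop := word X i u.length = u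

def IsFactor (X : ℕ → A) (u : List A) : Prop := ∃ i, OccursAt X u i

def IsPrefix (X : ℕ → A) (u : List A) : Prop := OccursAt X u 0

/-- Uniformly recurrent: gaps between successive occurrences of any factor are bounded. -/
def UnifRec (X : ℕ → A) : Prop :=
  ∀ u, IsFactor X u → ∃ g : ℕ, ∀ i : ℕ, ∃ j, i ≤ j ∧ j ≤ i + g ∧ OccursAt X u j

/-- Return words on `u`: factors between two successive occurrences of `u` in `X`. -/
def ReturnWords (X : ℕ → A) (u : List A) : Set (List A) :=
  { v | ∃ i j, OccursAt X u i ∧ OccursAt X u j ∧ i < j ∧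
      (∀ k, i < k → k < j → ¬ OccursAt X u k) ∧ v = word X i (j - i) }

/-- Application of a morphism to a word, by concatenation. -/
def wordApply (σ : A → List B) (w : List A) : List B := w.flatMap σ

/-- Iterate of a morphism. -/
def mPow (σ : A → List A) : ℕ → A → List A
  | 0 => fun a => [a]
  | k + 1 => fun a => wordApply σ (mPow σ k a)

def Nonerasing (σ : A → List A) : Prop := ∀ a, σ a ≠ []

/-- Primitivity: some power of the morphism maps every letter to a word
containing every letter. -/
def Primitive (σ : A → List A) : Prop := ∃ k, 0 < k ∧ ∀ a b : A, b ∈ mPow σ k a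

/-- Primitivity restricted to a set of letters. -/
def PrimitiveOn (σ : A → List A) (S : Set A) : Prop :=
  ∃ k, 0 < k ∧ ∀ a ∈ S, ∀ b ∈ S, b ∈ mPow σ k a

/-- `X` is a fixed point of `σ`: the image of every prefix of `X` is a prefix of `X`. -/
def IsFixedPt (σ : A → List A) (X : ℕ → A) : Prop :=
  ∀ n, OccursAt X (wordApply σ (word X 0 n)) 0

def UltPeriodic (X : ℕ → A) : Prop :=
  ∃ N p : ℕ, 0 < p ∧ ∀ n, N ≤ n → X (n + p) = X n

def Periodic (X : ℕ → A) : Prop := ∃ p : ℕ, 0 < p ∧ ∀ n, X (n + p) = X n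

/-- `u` occurs at position `i` inside the word `w`. -/
def WOcc (u w : List A) (i : ℕ) : Prop :=
  i + u.length ≤ w.length ∧ (w.drop i).take u.length = u

/-- `D` is the derived sequence of `X` on `u`: a sequence of return words on `u`
whose concatenation is `X`. -/
def IsDerived (X : ℕ → A) (u : List A) (D : ℕ → List A) : Prop :=
  (∀ n, D n ∈ ReturnWords X u) ∧ ∀ n, OccursAt X ((word D 0 n).flatten) 0

/-- `τu` is the return substitution of `τ` on `u` (on the alphabet of return words):
`Θ_u ∘ τ_u = τ ∘ Θ_u`. -/
def RetSub (τ : A → List A) (X : ℕ → A) (u : List A)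
    (τu : List A → List (List A)) : Prop :=
  ∀ r ∈ ReturnWords X u,
    (∀ s ∈ τu r, s ∈ ReturnWords X u) ∧ (τu r).flatten = wordApply τ r

/-- Eigenvalue of a complex matrix. -/
def IsEig {n : Type*} [Fintype n] (M : Matrix n n ℂ) (μ : ℂ) : Prop :=
  ∃ v : n → ℂ, v ≠ 0 ∧ M.mulVec v = μ • v

/-- Incidence matrix of a morphism, as a complex matrix. -/
def incMat [Fintype A] [DecidableEq A] (σ : A → List A) : Matrix A A ℂ :=
  Matrix.of fun i j => (((σ j).count i : ℕ) : ℂ)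

/-- Incidence matrix of a return substitution, indexed by the set of return words. -/
def retMat [DecidableEq A] (τu : List A → List (List A)) (S : Set (List A))
    [Fintype S] : Matrix S S ℂ :=
  Matrix.of fun i j => (((τu (j : List A)).count (i : List A) : ℕ) : ℂ)

/-- `α` is the dominant eigenvalue of the incidence matrix of `σ`. -/
def IsDomEig [Fintype A] [DecidableEq A] (σ : A → List A) (α : ℝ) : Prop :=
  IsEig (incMat σ) (α : ℂ) ∧ ∀ μ : ℂ, IsEig (incMat σ) μ → ‖μ‖ ≤ α

/-- `X` is `α`-substitutive: the image under a letter-to-letter morphism of the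
fixed point of a primitive substitution with dominant eigenvalue `α`. -/
def IsSubstitutiveWith {A : Type*} (α : ℝ) (X : ℕ → A) : Prop :=
  ∃ (C : Type) (hF : Fintype C) (hD : DecidableEq C) (σ : C → List C) (c : C)
    (Y : ℕ → C) (ψ : C → A),
    Nonerasing σ ∧ (σ c).head? = some c ∧ Primitive σ ∧
    Y 0 = c ∧ IsFixedPt σ Y ∧ (∀ n, X n = ψ (Y n)) ∧ @IsDomEig C hF hD σ α

/-- Perron number: a real algebraic integer `α ≥ 1` strictly dominating the
absolute values of its other conjugates. -/
def IsPerron (α : ℝ) : Prop :=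
  1 ≤ α ∧ IsIntegral ℤ α ∧
    ∀ β : ℂ, Polynomial.aeval β (minpoly ℤ α) = 0 → β ≠ (α : ℂ) → ‖β‖ < α

/-!
Every return word `r` on `u` is non-empty, `r ++ u` begins with `u`, and `r₁ ++ u <+: r₂ ++ u`
forces `r₁ = r₂`: otherwise `u` would occur strictly between the two successive occurrences
delimiting `r₂`. Given two factorizations of the same word into return words, appending `u`
makes both first factors followed by `u` prefixes of one word, hence comparable, hence equal;
cancel and induct.
-/

lemma prefix_flatten_append {S : Set (List A)} {u : List A} (hu : ∀ r ∈ S, u <+: r ++ u)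
    {l : List (List A)} (hl : ∀ w ∈ l, w ∈ S) : u <+: l.flatten ++ u := by
  induction l with
  | nil => simp
  | cons r t ih =>
    simp only [List.forall_mem_cons] at hl
    rw [List.flatten_cons, List.append_assoc]
    exact (hu r hl.1).trans ((List.prefix_append_right_inj r).mpr (ih hl.2))

theorem flatten_injective_of_append_prefix {S : Set (List A)} {u : List A}
    (hne : ∀ r ∈ S, r ≠ []) (hu : ∀ r ∈ S, u <+: r ++ u)
    (hS : ∀ r₁ ∈ S, ∀ r₂ ∈ S, r₁ ++ u <+: r₂ ++ u → r₁ = r₂) :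
    ∀ l₁ l₂ : List (List A), (∀ w ∈ l₁, w ∈ S) → (∀ w ∈ l₂, w ∈ S) →
      l₁.flatten = l₂.flatten → l₁ = l₂ := by
  intro l₁ l₂ h₁ h₂ heq
  induction l₁ generalizing l₂ with
  | nil =>
    cases l₂ with
    | nil => rfl
    | cons r t =>
      exact absurd (List.flatten_eq_nil_iff.mp heq.symm r (by simp)) (hne r (h₂ r (by simp)))
  | cons r₁ t₁ ih =>
    cases l₂ with
    | nil =>
      exact absurd (List.flatten_eq_nil_iff.mp heq r₁ (by simp)) (hne r₁ (h₁ r₁ (by simp)))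
    | cons r₂ t₂ =>
      simp only [List.forall_mem_cons] at h₁ h₂
      simp only [List.flatten_cons] at heq
      have hp₁ : r₁ ++ u <+: r₁ ++ t₁.flatten ++ u := by
        rw [List.append_assoc]
        exact (List.prefix_append_right_inj r₁).mpr (prefix_flatten_append hu h₁.2)
      have hp₂ : r₂ ++ u <+: r₁ ++ t₁.flatten ++ u := by
        rw [heq, List.append_assoc]
        exact (List.prefix_append_right_inj r₂).mpr (prefix_flatten_append hu h₂.2)
      have hr : r₁ = r₂ := by
        rcases List.prefix_or_prefix_of_prefix hp₁ hp₂ with h | h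
        · exact hS r₁ h₁.1 r₂ h₂.1 h
        · exact (hS r₂ h₂.1 r₁ h₁.1 h).symm
      subst hr
      rw [ih t₂ h₁.2 h₂.2 (List.append_cancel_left heq)]

lemma word_length (X : ℕ → A) (i n : ℕ) : (word X i n).length = n := by
  simp [word]

lemma word_add (X : ℕ → A) (i m n : ℕ) :
    word X i (m + n) = word X i m ++ word X (i + m) n := by
  simp only [word, List.range_add, List.map_append, List.map_map]
  congr 1
  exact List.map_congr_left fun k _ => by simp [Nat.add_assoc]

lemma word_prefix_word (X : ℕ → A) (i : ℕ) {m n : ℕ} (h : m ≤ n) :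
    word X i m <+: word X i n :=
  ⟨word X (i + m) (n - m), by rw [← word_add, Nat.add_sub_cancel' h]⟩

lemma occursAt_of_prefix_word {X : ℕ → A} {u : List A} {i n : ℕ}
    (h : u <+: word X i n) : OccursAt X u i := by
  have hlen : u.length ≤ n := word_length X i n ▸ h.length_le
  have hw := word_prefix_word X i hlen
  exact ((List.prefix_of_prefix_length_le h hw (by rw [word_length])).eq_of_length
    (by rw [word_length])).symm

lemma occursAt_of_append_prefix_word {X : ℕ → A} {u v : List A} {i n : ℕ}
    (h : v ++ u <+: word X i n) : OccursAt X u (i + v.length) := by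
  have hlen : v.length ≤ n := by
    have := h.length_le
    rw [List.length_append, word_length] at this
    omega
  rw [← Nat.add_sub_cancel' hlen, word_add] at h
  have := h.drop v.length
  rw [List.drop_left, List.drop_left' (word_length X i _)] at this
  exact occursAt_of_prefix_word this

namespace ReturnWords

variable {X : ℕ → A} {u r : List A}

lemma exists_append_eq_word (hr : r ∈ ReturnWords X u) :
    ∃ i, OccursAt X u i ∧ 0 < r.length ∧
      (∀ k, 0 < k → k < r.length → ¬ OccursAt X u (i + k)) ∧
      r ++ u = word X i (r.length + u.length) := by
  obtain ⟨i, j, hi, hj, hij, hgap, rfl⟩ := hr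
  have hj' : i + (j - i) = j := by omega
  refine ⟨i, hi, ?_, fun k hk hkj => hgap (i + k) (by omega) ?_, ?_⟩
  · rw [word_length]; omega
  · rw [word_length] at hkj; omega
  · rw [word_length, word_add, hj', hj]

lemma ne_nil (hr : r ∈ ReturnWords X u) : r ≠ [] := by
  obtain ⟨_, _, hpos, _⟩ := exists_append_eq_word hr
  exact List.length_pos_iff.mp hpos

lemma prefix_append (hr : r ∈ ReturnWords X u) : u <+: r ++ u := by
  obtain ⟨i, hi, _, _, heq⟩ := exists_append_eq_word hr
  have hi : word X i u.length = u := hi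
  conv_lhs => rw [← hi]
  exact heq ▸ word_prefix_word X i (Nat.le_add_left _ _)

lemma eq_of_append_prefix {r₁ r₂ : List A} (h₁ : r₁ ∈ ReturnWords X u)
    (h₂ : r₂ ∈ ReturnWords X u) (hp : r₁ ++ u <+: r₂ ++ u) : r₁ = r₂ := by
  obtain ⟨i, _, _, hgap, heq⟩ := exists_append_eq_word h₂
  have hocc : OccursAt X u (i + r₁.length) :=
    occursAt_of_append_prefix_word (heq ▸ hp)
  have hle : r₁.length ≤ r₂.length := by
    have := hp.length_le
    simp only [List.length_append] at this
    omega
  have hlen : r₁.length = r₂.length := by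
    by_contra h
    exact hgap r₁.length (List.length_pos_iff.mpr (ne_nil h₁)) (by omega) hocc
  exact List.append_cancel_right (hp.eq_of_length (by simp [hlen]))

end ReturnWords

theorem stmt2_general {A : Type*} (X : ℕ → A) (u : List A) :
    ∀ l₁ l₂ : List (List A), (∀ w ∈ l₁, w ∈ ReturnWords X u) →
      (∀ w ∈ l₂, w ∈ ReturnWords X u) → l₁.flatten = l₂.flatten → l₁ = l₂ :=
  flatten_injective_of_append_prefix (fun _ => ReturnWords.ne_nil)
    (fun _ => ReturnWords.prefix_append) (fun _ h₁ _ h₂ => ReturnWords.eq_of_append_prefix h₁ h₂)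

theorem stmt2 {A : Type*} (X : ℕ → A) (u : List A)
    (hX : UnifRec X) (hu : u ≠ []) (hpre : IsPrefix X u) :
    ∀ l₁ l₂ : List (List A), (∀ w ∈ l₁, w ∈ ReturnWords X u) →
      (∀ w ∈ l₂, w ∈ ReturnWords X u) → l₁.flatten = l₂.flatten → l₁ = l₂ :=
  stmt2_general X u

end Cobham
end

section
/- The fixed point of a primitive substitution is uniformly recurrent. -/
/-!
If the alphabet has a single letter the sequence is constant. Otherwise primitivity gives some
`k` with `|τᵏ b| ≥ 2` for every letter `b`, so the prefixes `τⁿ (X 0)` of `X` grow without bound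
and eventually contain any given factor `u`; applying `τᵏ` once more, `u` lies inside
`τᴺ b` for every letter `b`. Since `X` is also fixed by `τᴺ`, it is a concatenation of blocks
`τᴺ (X j)`, each of bounded length and each containing `u`, so the gaps between occurrences
of `u` are bounded by twice the maximal block length.
-/

namespace Cobham

open Filter

variable {A : Type*} {B : Type*}

lemma word_one (X : ℕ → A) (i : ℕ) : word X i 1 = [X i] := rfl

lemma word_take (X : ℕ → A) (i n m : ℕ) :
    (word X i n).take m = word X i (min m n) := by
  simp only [word, ← List.map_take, List.take_range]

lemma occursAt_word (X : ℕ → A) (i n : ℕ) : OccursAt X (word X i n) i := by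
  simp [OccursAt, word_length]

lemma OccursAt.infix {X : ℕ → A} {l v r : List A} {i : ℕ}
    (h : OccursAt X (l ++ v ++ r) i) : OccursAt X v (i + l.length) := by
  have hsplit : word X i (l ++ v ++ r).length =
      word X i l.length ++ word X (i + l.length) v.length ++
        word X (i + l.length + v.length) r.length := by
    simp only [List.length_append, word_add, List.append_assoc]
  rw [h] at hsplit
  have := (List.append_inj hsplit.symm (by simp [word_length])).1
  exact (List.append_inj this (word_length X i l.length)).2

lemma OccursAt.infix_of_prefix {X : ℕ → A} {u w : List A} {i : ℕ}
    (hu : OccursAt X u i) (hw : OccursAt X w 0) (hlen : i + u.length ≤ w.length) :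
    u <:+: w := by
  have htake : w.take (i + u.length) = word X 0 i ++ u := by
    conv_lhs => rw [← hw]
    rw [word_take, min_eq_left hlen, word_add, Nat.zero_add, hu]
  exact ⟨word X 0 i, w.drop (i + u.length), by rw [← htake, List.take_append_drop]⟩

lemma unifRec_of_subsingleton [Subsingleton A] (X : ℕ → A) : UnifRec X := by
  rintro u ⟨i₀, hu⟩
  refine ⟨0, fun i => ⟨i, le_rfl, Nat.le_add_right i 0, ?_⟩⟩
  exact (List.map_congr_left fun _ _ => Subsingleton.elim _ _).trans hu

lemma wordApply_append (σ : A → List B) (w v : List A) :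
    wordApply σ (w ++ v) = wordApply σ w ++ wordApply σ v := by
  simp [wordApply]

lemma wordApply_singleton (σ : A → List B) (a : A) : wordApply σ [a] = σ a := by
  simp [wordApply]

lemma mul_length_le_length_wordApply {σ : A → List B} {c : ℕ}
    (hc : ∀ a, c ≤ (σ a).length) (w : List A) :
    c * w.length ≤ (wordApply σ w).length := by
  induction w with
  | nil => simp [wordApply]
  | cons a w ih =>
    rw [← List.singleton_append, wordApply_append, wordApply_singleton]
    simp only [List.length_append, List.length_singleton, Nat.mul_add, mul_one]
    have := hc a
    omega

lemma mPow_add (σ : A → List A) (m n : ℕ) (a : A) :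
    mPow σ (m + n) a = wordApply (mPow σ n) (mPow σ m a) := by
  induction n with
  | zero => simp [mPow, wordApply]
  | succ n ih =>
    show wordApply σ (mPow σ (m + n) a) = _
    rw [ih]
    simp only [wordApply, List.flatMap_assoc]
    rfl

lemma wordApply_mPow_succ (σ : A → List A) (n : ℕ) (w : List A) :
    wordApply (mPow σ (n + 1)) w = wordApply σ (wordApply (mPow σ n) w) := by
  simp only [wordApply, List.flatMap_assoc]
  rfl

lemma nonerasing_mPow {σ : A → List A} (hne : Nonerasing σ) (n : ℕ) :
    Nonerasing (mPow σ n) := by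
  induction n with
  | zero => intro a; simp [mPow]
  | succ n ih =>
    intro a h
    obtain ⟨b, hb⟩ := List.exists_mem_of_ne_nil _ (ih a)
    exact hne b (List.flatMap_eq_nil_iff.mp h b hb)

lemma isFixedPt_mPow {σ : A → List A} {X : ℕ → A} (hfix : IsFixedPt σ X) (n : ℕ) :
    IsFixedPt (mPow σ n) X := by
  induction n with
  | zero =>
    intro m
    simpa [wordApply, Cobham.mPow] using occursAt_word X 0 m
  | succ n ih =>
    intro m
    have h := hfix (wordApply (mPow σ n) (word X 0 m)).length
    rwa [ih m, ← wordApply_mPow_succ] at h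

lemma IsFixedPt.occursAt_mPow {σ : A → List A} {X : ℕ → A} (hfix : IsFixedPt σ X) (n : ℕ) :
    OccursAt X (mPow σ n (X 0)) 0 := by
  simpa [word_one, wordApply_singleton] using isFixedPt_mPow hfix n 1

lemma IsFixedPt.occursAt_image {σ : A → List A} {X : ℕ → A} (hfix : IsFixedPt σ X) (j : ℕ) :
    OccursAt X (σ (X j)) (wordApply σ (word X 0 j)).length := by
  have h := hfix (j + 1)
  rw [word_add, wordApply_append, word_one, Nat.zero_add, wordApply_singleton,
    ← List.append_nil (_ ++ σ (X j))] at h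
  simpa using h.infix

lemma exists_le_le_add_of_step_le {p : ℕ → ℕ} {L : ℕ} (h0 : p 0 = 0)
    (hstep : ∀ j, p j < p (j + 1) ∧ p (j + 1) ≤ p j + L) (i : ℕ) :
    ∃ j, i ≤ p j ∧ p j ≤ i + L := by
  induction i with
  | zero => exact ⟨0, by omega⟩
  | succ i ih =>
    obtain ⟨j, hij, hjL⟩ := ih
    rcases Nat.lt_or_ge i (p j) with hlt | hle
    · exact ⟨j, hlt, by omega⟩
    · have := hstep j
      exact ⟨j + 1, by omega⟩

lemma IsFixedPt.bounded_gaps_of_forall_infix {σ : A → List A} {X : ℕ → A} (hfix : IsFixedPt σ X)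
    (hne : Nonerasing σ) {u : List A} {L : ℕ} (hL : ∀ b, (σ b).length ≤ L)
    (hu : ∀ b, u <:+: σ b) : ∃ g : ℕ, ∀ i : ℕ, ∃ j, i ≤ j ∧ j ≤ i + g ∧ OccursAt X u j := by
  set p : ℕ → ℕ := fun j => (wordApply σ (word X 0 j)).length
  have hp : ∀ j, p (j + 1) = p j + (σ (X j)).length := fun j => by
    simp only [p, word_add, wordApply_append, word_one, Nat.zero_add, wordApply_singleton,
      List.length_append]
  have hstep : ∀ j, p j < p (j + 1) ∧ p (j + 1) ≤ p j + L := fun j => by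
    have := List.length_pos_iff.mpr (hne (X j))
    have := hL (X j)
    rw [hp]
    omega
  refine ⟨2 * L, fun i => ?_⟩
  obtain ⟨j, hij, hjL⟩ := exists_le_le_add_of_step_le (by simp [p, word, wordApply]) hstep i
  obtain ⟨s, t, hst⟩ := hu (X j)
  have hocc : OccursAt X u (p j + s.length) := by
    have := hfix.occursAt_image j
    rw [← hst] at this
    exact this.infix
  have hlen : s.length + u.length + t.length ≤ L := by
    simpa [← hst, add_assoc] using hL (X j)
  exact ⟨p j + s.length, by omega, by omega, hocc⟩

lemma Primitive.finite {σ : A → List A} (hprim : Primitive σ) : Finite A := by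
  obtain ⟨k, -, hk⟩ := hprim
  rcases isEmpty_or_nonempty A with hA | hA
  · infer_instance
  obtain ⟨a⟩ := hA
  exact Set.finite_univ_iff.mp ((List.finite_toSet (mPow σ k a)).subset fun b _ => hk a b)

lemma two_le_length_of_forall_mem [Nontrivial A] {l : List A} (h : ∀ b, b ∈ l) :
    2 ≤ l.length := by
  classical
  obtain ⟨x, y, hxy⟩ := exists_pair_ne A
  calc 2 = ({x, y} : Finset A).card := (Finset.card_pair hxy).symm
    _ ≤ l.toFinset.card := Finset.card_le_card fun b _ => List.mem_toFinset.mpr (h b)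
    _ ≤ l.length := List.toFinset_card_le l

lemma two_pow_le_length_mPow {σ : A → List A} {k : ℕ} (h2 : ∀ b, 2 ≤ (mPow σ k b).length)
    (m : ℕ) (b : A) : 2 ^ m ≤ (mPow σ (k * m) b).length :=
  match m with
  | 0 => by simp [mPow]
  | m + 1 =>
    calc 2 ^ (m + 1) ≤ 2 * (mPow σ (k * m) b).length := by
          rw [pow_succ']; exact Nat.mul_le_mul_left 2 (two_pow_le_length_mPow h2 m b)
      _ ≤ (mPow σ (k * (m + 1)) b).length := by
          rw [Nat.mul_succ, mPow_add]; exact mul_length_le_length_wordApply h2 _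

lemma Primitive.exists_forall_infix_mPow [Nontrivial A] {σ : A → List A} {X : ℕ → A}
    (hprim : Primitive σ) (hfix : IsFixedPt σ X) {u : List A} (hu : IsFactor X u) :
    ∃ N, ∀ b, u <:+: mPow σ N b := by
  obtain ⟨k, -, hk⟩ := hprim
  obtain ⟨i, hi⟩ := hu
  set n := k * (i + u.length)
  have hgrow : i + u.length ≤ (mPow σ n (X 0)).length :=
    Nat.lt_two_pow_self.le.trans
      (two_pow_le_length_mPow (fun b => two_le_length_of_forall_mem (hk b)) _ _)
  have hpre : u <:+: mPow σ n (X 0) := hi.infix_of_prefix (hfix.occursAt_mPow n) hgrow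
  refine ⟨k + n, fun b => ?_⟩
  rw [mPow_add]
  exact hpre.trans (List.infix_flatMap_of_mem (hk b (X 0)) _)

theorem stmt19_general {A : Type*} (τ : A → List A) (X : ℕ → A)
    (hne : Nonerasing τ) (hprim : Primitive τ)
    (hfix : IsFixedPt τ X) :
    UnifRec X := by
  rcases subsingleton_or_nontrivial A with hA | hA
  · exact unifRec_of_subsingleton X
  intro u hu
  obtain ⟨N, hN⟩ := hprim.exists_forall_infix_mPow hfix hu
  have := hprim.finite
  obtain ⟨L, hL⟩ := (Set.finite_range fun b => (mPow τ N b).length).bddAbove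
  exact (isFixedPt_mPow hfix N).bounded_gaps_of_forall_infix (nonerasing_mPow hne N)
    (fun b => hL ⟨b, rfl⟩) hN

theorem stmt19 {A : Type*} (τ : A → List A) (a : A) (X : ℕ → A)
    (hne : Nonerasing τ) (hhead : (τ a).head? = some a) (hprim : Primitive τ)
    (hX0 : X 0 = a) (hfix : IsFixedPt τ X) :
    UnifRec X :=
  stmt19_general τ X hne hprim hfix

end Cobham
end
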